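/- arXiv:2507.12717 — 5 statements merged into one kernel-verified Lean document; each statement's English description precedes it below -/
import Mathlib

section
/- Fix a ∈ ℝ, b ∈ ℝᵐ, c ∈ ℝ, p > 0, and a positive definite symmetric matrix Γ ∈ ℝ^{m×m}. Suppose it is not the case that (b = 0 ∧ c ≤ 0 ∧ a < 0). Define φ = 0 if b = 0 and c ≤ 0, and φ = ReLU(-a)/(‖b‖²_Γ + p·ReLU(c)²) otherwise, where ‖b‖²_Γ = bᵀΓb; and define χ = 0 if b = 0 and c ≤ 0, and χ = ReLU(-a)·ReLU(c)/(‖b‖²_Γ + p·c²) otherwise. Then (u*, ω*) = (φ·b, χ) minimizes ½‖u‖²_Γ + ½p·ω² over all (u, ω) ∈ ℝᵐ × ℝ≥0 satisfying a + bᵀΓu + c·p·ω ≥ 0. -/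
/-!
Put `g = (b, max 0 c)` in `ℝᵐ × ℝ` with the inner product `⟪(u, ω), (v, ν)⟫ = uᵀ Γ v + p ω ν`,
so that the cost is `‖(u, ω)‖² / 2`. Since `ω ≥ 0` gives `c ω ≤ (max 0 c) ω`, every feasible
`(u, ω)` lies in the half-space `⟪g, ·⟫ ≥ -a`, whose point of least norm is
`(max 0 (-a) / ‖g‖²) • g = (φ • b, χ)` by Cauchy–Schwarz. That point is feasible because
`c · max 0 c = (max 0 c)²` makes the constraint active there, unless `‖g‖ = 0`, i.e. `b = 0` and
`c ≤ 0`, where the hypothesis gives `a ≥ 0` and the origin is feasible.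
-/

open Matrix

namespace LinearMap.BilinForm

variable {R M : Type*} [Field R] [LinearOrder R] [AddCommGroup M] [Module R M]
  {B : LinearMap.BilinForm R M}

theorem le_apply_smul_self (g : M) (hg : B g g ≠ 0) (r : R) :
    r ≤ B g ((max 0 r / B g g) • g) := by
  rw [map_smul, smul_eq_mul, div_mul_cancel₀ _ hg]
  exact le_max_right 0 r

variable [IsStrictOrderedRing R]

theorem apply_smul_self_le_of_le_apply (hB : ∀ x, 0 ≤ B x x) (hBs : B.IsSymm) {g x : M} {r : R}
    (hx : r ≤ B g x) :
    B ((max 0 r / B g g) • g) ((max 0 r / B g g) • g) ≤ B x x := by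
  rcases le_or_gt r 0 with hr | hr
  · simpa [max_eq_left hr] using hB x
  have hcs : B g x ^ 2 ≤ B g g * B x x := apply_sq_le_of_symm B hB (isSymm_iff.mp hBs) g x
  have hgg : 0 < B g g := (hB g).lt_of_ne' fun h => by nlinarith [hB x]
  simp only [max_eq_right hr.le, map_smul, smul_apply, smul_eq_mul]
  rw [div_mul_cancel₀ _ hgg.ne', div_mul_eq_mul_div, div_le_iff₀ hgg]
  nlinarith

end LinearMap.BilinForm

variable {n : Type*} [Fintype n]

def Matrix.weightedBilin (Γ : Matrix n n ℝ) (p : ℝ) : LinearMap.BilinForm ℝ ((n → ℝ) × ℝ) :=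
  LinearMap.mk₂ ℝ (fun x y => x.1 ⬝ᵥ Γ *ᵥ y.1 + p * (x.2 * y.2))
    (fun _ _ _ => by simp only [Prod.fst_add, Prod.snd_add, add_dotProduct]; ring)
    (fun _ _ _ => by simp only [Prod.smul_fst, Prod.smul_snd, smul_dotProduct, smul_eq_mul]; ring)
    (fun _ _ _ => by simp only [Prod.fst_add, Prod.snd_add, mulVec_add, dotProduct_add]; ring)
    (fun _ _ _ => by
      simp only [Prod.smul_fst, Prod.smul_snd, mulVec_smul, dotProduct_smul, smul_eq_mul]; ring)

namespace Matrix.weightedBilin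

variable {Γ : Matrix n n ℝ} {p : ℝ}

@[simp]
theorem apply (Γ : Matrix n n ℝ) (p : ℝ) (x y : (n → ℝ) × ℝ) :
    weightedBilin Γ p x y = x.1 ⬝ᵥ Γ *ᵥ y.1 + p * (x.2 * y.2) :=
  rfl

theorem isSymm (hΓ : Γ.IsSymm) : (weightedBilin Γ p).IsSymm :=
  LinearMap.BilinForm.isSymm_def.mpr fun x y => by
    have hxy := dotProduct_transpose_mulVec Γ y.1 x.1
    rw [hΓ.eq] at hxy
    rw [apply, apply, hxy, mul_comm x.2]

theorem apply_self_nonneg (hΓ : Γ.PosSemidef) (hp : 0 ≤ p) (x : (n → ℝ) × ℝ) :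
    0 ≤ weightedBilin Γ p x x :=
  add_nonneg (by simpa using hΓ.dotProduct_mulVec_nonneg x.1)
    (mul_nonneg hp (mul_self_nonneg x.2))

theorem apply_self_pos (hΓ : Γ.PosDef) (hp : 0 < p) {x : (n → ℝ) × ℝ} (hx : x ≠ 0) :
    0 < weightedBilin Γ p x x := by
  obtain ⟨u, ω⟩ := x
  by_cases hu : u = 0
  · have hω : ω ≠ 0 := by rintro rfl; exact hx (by simp [hu])
    simpa [hu] using mul_pos hp (mul_self_pos.mpr hω)
  · exact add_pos_of_pos_of_nonneg (by simpa using hΓ.dotProduct_mulVec_pos hu)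
      (mul_nonneg hp.le (mul_self_nonneg ω))

theorem eq_zero_of_apply_self_eq_zero (hΓ : Γ.PosDef) (hp : 0 < p) {x : (n → ℝ) × ℝ}
    (hx : weightedBilin Γ p x x = 0) : x = 0 := by
  by_contra hx'
  exact (apply_self_pos hΓ hp hx').ne' hx

end Matrix.weightedBilin

theorem mul_max_zero_self {α : Type*} [Ring α] [LinearOrder α] [IsStrictOrderedRing α] (c : α) :
    c * max 0 c = max 0 c * max 0 c := by
  rcases le_total c 0 with hc | hc <;> simp [hc]

section Gains

variable (Γ : Matrix n n ℝ) (b : n → ℝ) (c p x : ℝ)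

theorem ite_zero_div_eq_div :
    (if b = 0 ∧ c ≤ 0 then 0 else x / (b ⬝ᵥ Γ *ᵥ b + p * max 0 c ^ 2)) =
      x / (b ⬝ᵥ Γ *ᵥ b + p * max 0 c ^ 2) := by
  split_ifs with h
  -- the denominator vanishes in this case, and `x / 0 = 0`
  · obtain ⟨rfl, hc⟩ := h
    simp [hc]
  · rfl

theorem ite_zero_mul_max_div_eq :
    (if b = 0 ∧ c ≤ 0 then 0 else x * max 0 c / (b ⬝ᵥ Γ *ᵥ b + p * c ^ 2)) =
      x / (b ⬝ᵥ Γ *ᵥ b + p * max 0 c ^ 2) * max 0 c := by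
  rcases le_or_gt c 0 with hc | hc
  · simp [hc]
  · rw [if_neg fun h => hc.not_ge h.2, max_eq_right hc.le, div_mul_eq_mul_div]

end Gains

/-- Closed-form solution of the optimal-decay CBF quadratic program (Lemma 4). -/
theorem stmt3 {m : ℕ} (a : ℝ) (b : Fin m → ℝ) (c p : ℝ) (hp : 0 < p)
    (Γ : Matrix (Fin m) (Fin m) ℝ) (hΓ : Γ.PosDef)
    (hne : ¬(b = 0 ∧ c ≤ 0 ∧ a < 0))
    (φ χ : ℝ)
    (hφ : φ = if b = 0 ∧ c ≤ 0 then 0 else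
      max 0 (-a) / (b ⬝ᵥ Γ *ᵥ b + p * (max 0 c) ^ 2))
    (hχ : χ = if b = 0 ∧ c ≤ 0 then 0 else
      max 0 (-a) * max 0 c / (b ⬝ᵥ Γ *ᵥ b + p * c ^ 2)) :
    (0 ≤ χ ∧ 0 ≤ a + b ⬝ᵥ Γ *ᵥ (φ • b) + c * p * χ) ∧
      ∀ u : Fin m → ℝ, ∀ ω : ℝ, 0 ≤ ω → 0 ≤ a + b ⬝ᵥ Γ *ᵥ u + c * p * ω →
        (1 / 2) * ((φ • b) ⬝ᵥ Γ *ᵥ (φ • b)) + (1 / 2) * p * χ ^ 2 ≤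
          (1 / 2) * (u ⬝ᵥ Γ *ᵥ u) + (1 / 2) * p * ω ^ 2 := by
  set B := weightedBilin Γ p
  set g : (Fin m → ℝ) × ℝ := (b, max 0 c)
  have hB := weightedBilin.apply_self_nonneg hΓ.posSemidef hp.le
  have hgg : B g g = b ⬝ᵥ Γ *ᵥ b + p * max 0 c ^ 2 := by simp [B, g, sq]
  rw [ite_zero_div_eq_div, ← hgg] at hφ
  rw [ite_zero_mul_max_div_eq, ← hgg] at hχ
  set t := max 0 (-a) / B g g
  have ht : 0 ≤ t := div_nonneg (le_max_left _ _) (hB g)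
  have hopt : ((φ • b, χ) : (Fin m → ℝ) × ℝ) = t • g := by simp [hφ, hχ, g]
  have hcost (u : Fin m → ℝ) (ω : ℝ) :
      (1 / 2) * (u ⬝ᵥ Γ *ᵥ u) + (1 / 2) * p * ω ^ 2 = B (u, ω) (u, ω) / 2 := by
    simp only [B, weightedBilin.apply]; ring
  have hactive : a + b ⬝ᵥ Γ *ᵥ (φ • b) + c * p * χ = a + B g (φ • b, χ) := by
    simp only [B, g, weightedBilin.apply, hχ]
    linear_combination p * t * mul_max_zero_self c
  refine ⟨⟨hχ ▸ mul_nonneg ht (le_max_left 0 c), ?_⟩, fun u ω hω hfeas => ?_⟩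
  · rw [hactive, hopt]
    by_cases h0 : B g g = 0
    · have hg : g = 0 := weightedBilin.eq_zero_of_apply_self_eq_zero hΓ hp h0
      have ha : 0 ≤ a := not_lt.mp fun ha =>
        hne ⟨congrArg Prod.fst hg, max_eq_left_iff.mp (congrArg Prod.snd hg), ha⟩
      simpa [hg] using ha
    · linarith [B.le_apply_smul_self g h0 (-a)]
  · have hhalf : -a ≤ B g (u, ω) := by
      simp only [B, g, weightedBilin.apply]
      nlinarith [le_max_right 0 c, mul_nonneg hp.le hω]
    rw [hcost, hcost, hopt]
    gcongr
    exact LinearMap.BilinForm.apply_smul_self_le_of_le_apply hB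
      (weightedBilin.isSymm (isHermitian_iff_isSymm.mp hΓ.isHermitian)) hhalf
end

section
/- The function φ : ℝ × ℝ × ℝ → ℝ given by φ(a,b,c) = 0 if (b = 0 and c ≤ 0), and φ(a,b,c) = ReLU(-a)/(b² + p·ReLU(c)²) otherwise (p > 0 fixed), is continuous at every point (a₀,b₀,c₀) such that either b₀² + ReLU(c₀)² > 0, or a₀ > 0. -/
/-- The OD-CBF-QP gain function is continuous wherever the denominator does not vanish
or the numerator is inactive. -/
theorem stmt7 (p : ℝ) (hp : 0 < p) (φ : ℝ → ℝ → ℝ → ℝ)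
    (hφ : ∀ a b c, φ a b c = if b = 0 ∧ c ≤ 0 then 0
        else max 0 (-a) / (b ^ 2 + p * (max 0 c) ^ 2))
    (a₀ b₀ c₀ : ℝ) (hpt : 0 < b₀ ^ 2 + (max 0 c₀) ^ 2 ∨ 0 < a₀) :
    ContinuousAt (fun q : ℝ × ℝ × ℝ => φ q.1 q.2.1 q.2.2) (a₀, b₀, c₀) := by
  by_cases hD : 0 < b₀ ^ 2 + (max 0 c₀) ^ 2
  · -- denominator positive
    have hopen : IsOpen {q : ℝ × ℝ × ℝ | q.2.1 ≠ 0 ∨ 0 < q.2.2} := by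
      apply IsOpen.union
      · exact isOpen_compl_singleton.preimage (continuous_fst.comp continuous_snd)
      · exact isOpen_lt continuous_const (continuous_snd.comp continuous_snd)
    have hmem : (a₀, b₀, c₀) ∈ {q : ℝ × ℝ × ℝ | q.2.1 ≠ 0 ∨ 0 < q.2.2} := by
      by_contra h
      simp only [Set.mem_setOf_eq, not_or, not_lt, not_ne_iff] at h
      obtain ⟨h1, h2⟩ := h
      simp only [h1] at hD
      rw [max_eq_left h2] at hD
      norm_num at hD
    have hden : b₀ ^ 2 + p * (max 0 c₀) ^ 2 ≠ 0 := by
      have h1 := mul_pos hp hD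
      nlinarith [sq_nonneg b₀, sq_nonneg (max 0 c₀),
        mul_nonneg hp.le (sq_nonneg (max 0 c₀)), mul_nonneg hp.le (sq_nonneg b₀)]
    have hcont : ContinuousAt
        (fun q : ℝ × ℝ × ℝ => max 0 (-q.1) / (q.2.1 ^ 2 + p * (max 0 q.2.2) ^ 2))
        (a₀, b₀, c₀) := by
      apply ContinuousAt.div
      · exact (continuous_const.max continuous_fst.neg).continuousAt
      · exact ((continuous_fst.comp continuous_snd).pow 2 |>.add
          (continuous_const.mul ((continuous_const.max
            (continuous_snd.comp continuous_snd)).pow 2))).continuousAt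
      · exact hden
    refine hcont.congr ?_
    filter_upwards [hopen.mem_nhds hmem] with q hq
    rw [hφ]
    rw [if_neg]
    rintro ⟨hb, hc⟩
    rcases hq with h | h
    · exact h hb
    · linarith
  · -- denominator zero: b₀ = 0, c₀ ≤ 0, a₀ > 0
    have ha : 0 < a₀ := hpt.resolve_left hD
    push_neg at hD
    have hopen : IsOpen {q : ℝ × ℝ × ℝ | 0 < q.1} := isOpen_lt continuous_const continuous_fst
    have hmem : (a₀, b₀, c₀) ∈ {q : ℝ × ℝ × ℝ | 0 < q.1} := ha
    refine (continuousAt_const (y := (0 : ℝ))).congr ?_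
    filter_upwards [hopen.mem_nhds hmem] with q hq
    rw [hφ]
    split
    · rfl
    · rw [max_eq_left (by linarith [hq]), zero_div]
end

section
/- With h(x) = ψ(x) - Γ(s(x)) where s(x) = L_f ψ(x) + α₁(ψ(x)) - ε, Γ(s) = ReLU(-C₁s³), C₁ > 0, ε > 0, ψ of relative degree 2: if s(x) ≥ 0 then h(x) = ψ(x) and L_f h(x) = L_f ψ(x). Moreover, assume the condition (h(x) = 0 ∧ L_g L_f ψ(x) = 0) → s(x) ≥ 0 holds at a point x. Then (h(x) = 0 ∧ L_g h(x) = 0) → L_f h(x) ≥ ε - α₁(0) = ε > 0. -/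
open Matrix

/-! Γ(t) = max 0 (-C t³) is differentiable, with Γ' = 0 on [0, ∞) and Γ' ≠ 0 on (-∞, 0), so
h = ψ - Γ ∘ s agrees with ψ to first order wherever s ≥ 0. Since L_g ψ = 0, the chain rule gives
L_g h = -Γ'(s) L_g L_f ψ. Hence h(x) = 0 and L_g h(x) = 0 force s(x) ≥ 0: otherwise Γ'(s(x)) ≠ 0, so
L_g L_f ψ(x) = 0 and the hypothesis gives s(x) ≥ 0 anyway. Then ψ(x) = h(x) = 0 and
L_f h(x) = L_f ψ(x) = s(x) + ε - α₁(0) ≥ ε - α₁(0). -/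

def reluNegCube (C t : ℝ) : ℝ := max 0 (-(C * t ^ 3))

noncomputable def reluNegCubeDeriv (C t : ℝ) : ℝ := if t < 0 then -(3 * C * t ^ 2) else 0

section ReluNegCube

variable {C : ℝ}

theorem reluNegCube_of_nonneg (hC : 0 ≤ C) {t : ℝ} (ht : 0 ≤ t) : reluNegCube C t = 0 :=
  max_eq_left (neg_nonpos.2 (by positivity))

theorem reluNegCube_of_nonpos (hC : 0 ≤ C) {t : ℝ} (ht : t ≤ 0) :
    reluNegCube C t = -(C * t ^ 3) :=
  max_eq_right (neg_nonneg.2 (mul_nonpos_of_nonneg_of_nonpos hC (Odd.pow_nonpos (by decide) ht)))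

theorem abs_reluNegCube_le (hC : 0 ≤ C) (t : ℝ) : |reluNegCube C t| ≤ C * |t ^ 3| := by
  rcases le_total 0 t with ht | ht
  · rw [reluNegCube_of_nonneg hC ht, abs_zero]; positivity
  · rw [reluNegCube_of_nonpos hC ht, abs_neg, abs_mul, abs_of_nonneg hC]

theorem hasDerivAt_reluNegCube_zero (hC : 0 ≤ C) : HasDerivAt (reluNegCube C) 0 0 := by
  rw [hasDerivAt_iff_isLittleO_nhds_zero]
  have hbound : (fun t => reluNegCube C t) =O[nhds 0] fun t : ℝ => t ^ 3 :=
    Asymptotics.isBigO_of_le' _ fun t => by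
      simpa only [Real.norm_eq_abs] using abs_reluNegCube_le hC t
  simpa [reluNegCube_of_nonneg hC le_rfl] using
    hbound.trans_isLittleO (Asymptotics.isLittleO_pow_id (by norm_num))

theorem hasDerivAt_reluNegCube (hC : 0 ≤ C) (t : ℝ) :
    HasDerivAt (reluNegCube C) (reluNegCubeDeriv C t) t := by
  rcases lt_trichotomy t 0 with ht | rfl | ht
  · rw [reluNegCubeDeriv, if_pos ht]
    have hcube : HasDerivAt (fun y => -C * y ^ 3) (-(3 * C * t ^ 2)) t :=
      ((hasDerivAt_pow 3 t).const_mul (-C)).congr_deriv (by push_cast; ring)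
    refine hcube.congr_of_eventuallyEq ?_
    filter_upwards [Iio_mem_nhds ht] with y hy
    rw [reluNegCube_of_nonpos hC hy.le, neg_mul]
  · simpa [reluNegCubeDeriv] using hasDerivAt_reluNegCube_zero hC
  · rw [reluNegCubeDeriv, if_neg ht.not_gt]
    refine (hasDerivAt_const t 0).congr_of_eventuallyEq ?_
    filter_upwards [Ioi_mem_nhds ht] with y hy using reluNegCube_of_nonneg hC hy.le

theorem reluNegCubeDeriv_of_nonneg {t : ℝ} (ht : 0 ≤ t) : reluNegCubeDeriv C t = 0 :=
  if_neg ht.not_gt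

theorem reluNegCubeDeriv_ne_zero (hC : 0 < C) {t : ℝ} (ht : t < 0) :
    reluNegCubeDeriv C t ≠ 0 := by
  rw [reluNegCubeDeriv, if_pos ht]
  have := ht.ne
  exact neg_ne_zero.2 (by positivity)

end ReluNegCube

theorem stmt12_general {n m : ℕ} (ψ : (Fin n → ℝ) → ℝ) (hψ : ContDiff ℝ 2 ψ)
    (f : (Fin n → ℝ) → (Fin n → ℝ)) (hf : ContDiff ℝ 1 f)
    (g : (Fin n → ℝ) → Matrix (Fin n) (Fin m) ℝ)
    (hrel : ∀ x, ∀ u : Fin m → ℝ, fderiv ℝ ψ x (g x *ᵥ u) = 0)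
    (α₁ : ℝ → ℝ) (hα₁ : ContDiff ℝ 1 α₁) (h0 : α₁ 0 = 0)
    (ε C₁ : ℝ) (hε : 0 < ε) (hC : 0 < C₁)
    (Lfψ s h : (Fin n → ℝ) → ℝ)
    (hLf : ∀ x, Lfψ x = fderiv ℝ ψ x (f x))
    (hs : ∀ x, s x = Lfψ x + α₁ (ψ x) - ε)
    (hdef : ∀ x, h x = ψ x - max 0 (-(C₁ * s x ^ 3))) :
    (∀ x, 0 ≤ s x → h x = ψ x ∧ fderiv ℝ h x (f x) = fderiv ℝ ψ x (f x)) ∧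
      ∀ x, ((h x = 0 ∧ ∀ u : Fin m → ℝ, fderiv ℝ Lfψ x (g x *ᵥ u) = 0) → 0 ≤ s x) →
        (h x = 0 ∧ ∀ u : Fin m → ℝ, fderiv ℝ h x (g x *ᵥ u) = 0) →
          ε - α₁ 0 ≤ fderiv ℝ h x (f x) ∧ 0 < fderiv ℝ h x (f x) := by
  have hψd : Differentiable ℝ ψ := hψ.differentiable (by norm_num)
  have hLfψd : Differentiable ℝ Lfψ := by
    rw [funext hLf]
    exact ((hψ.fderiv_right le_rfl).differentiable one_ne_zero).clm_apply
      (hf.differentiable one_ne_zero)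
  have hDs (x) : HasFDerivAt s (fderiv ℝ Lfψ x + deriv α₁ (ψ x) • fderiv ℝ ψ x) x := by
    rw [funext hs]
    have hα₁ψ := ((hα₁.differentiable one_ne_zero) (ψ x)).hasDerivAt.comp_hasFDerivAt x
      (hψd x).hasFDerivAt
    exact ((hLfψd x).hasFDerivAt.add hα₁ψ).sub_const ε
  have hDh (x) : fderiv ℝ h x = fderiv ℝ ψ x - reluNegCubeDeriv C₁ (s x) •
      (fderiv ℝ Lfψ x + deriv α₁ (ψ x) • fderiv ℝ ψ x) := by
    have : h = fun y => ψ y - reluNegCube C₁ (s y) := funext hdef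
    rw [this]
    exact ((hψd x).hasFDerivAt.sub
      ((hasDerivAt_reluNegCube hC.le (s x)).comp_hasFDerivAt x (hDs x))).fderiv
  have hval (x) (hx : 0 ≤ s x) : h x = ψ x := by
    rw [hdef x, ← reluNegCube, reluNegCube_of_nonneg hC.le hx, sub_zero]
  have hLfh (x) (hx : 0 ≤ s x) : fderiv ℝ h x (f x) = fderiv ℝ ψ x (f x) := by
    simp [hDh, reluNegCubeDeriv_of_nonneg hx]
  have hLgh (x) (u : Fin m → ℝ) : fderiv ℝ h x (g x *ᵥ u) =
      -(reluNegCubeDeriv C₁ (s x) * fderiv ℝ Lfψ x (g x *ᵥ u)) := by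
    simp [hDh, hrel]
  refine ⟨fun x hx => ⟨hval x hx, hLfh x hx⟩, fun x hcond ⟨hh0, hLgh0⟩ => ?_⟩
  have hsx : 0 ≤ s x := by
    by_contra! hneg
    refine hneg.not_ge (hcond ⟨hh0, fun u => ?_⟩)
    have := hLgh0 u
    rw [hLgh, neg_eq_zero] at this
    exact (mul_eq_zero.1 this).resolve_left (reluNegCubeDeriv_ne_zero hC hneg)
  have hLfh_eq : fderiv ℝ h x (f x) = s x + ε - α₁ 0 := by
    rw [hLfh x hsx, ← hLf, hs, ← hval x hsx, hh0]; ring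
  constructor <;> linarith

/-- Core of Proposition 4: the rectified CBF condition implies the optimal-decay
CBF condition. -/
theorem stmt12 {n m : ℕ} (ψ : (Fin n → ℝ) → ℝ) (hψ : ContDiff ℝ 2 ψ)
    (f : (Fin n → ℝ) → (Fin n → ℝ)) (hf : ContDiff ℝ 1 f)
    (g : (Fin n → ℝ) → Matrix (Fin n) (Fin m) ℝ)
    (hrel : ∀ x, ∀ u : Fin m → ℝ, fderiv ℝ ψ x (g x *ᵥ u) = 0)
    (α₁ : ℝ → ℝ) (hα₁ : ContDiff ℝ 1 α₁) (hm : StrictMono α₁) (h0 : α₁ 0 = 0)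
    (ε C₁ : ℝ) (hε : 0 < ε) (hC : 0 < C₁)
    (Lfψ s h : (Fin n → ℝ) → ℝ)
    (hLf : ∀ x, Lfψ x = fderiv ℝ ψ x (f x))
    (hs : ∀ x, s x = Lfψ x + α₁ (ψ x) - ε)
    (hdef : ∀ x, h x = ψ x - max 0 (-(C₁ * s x ^ 3))) :
    (∀ x, 0 ≤ s x → h x = ψ x ∧ fderiv ℝ h x (f x) = fderiv ℝ ψ x (f x)) ∧
      ∀ x, ((h x = 0 ∧ ∀ u : Fin m → ℝ, fderiv ℝ Lfψ x (g x *ᵥ u) = 0) → 0 ≤ s x) →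
        (h x = 0 ∧ ∀ u : Fin m → ℝ, fderiv ℝ h x (g x *ᵥ u) = 0) →
          ε - α₁ 0 ≤ fderiv ℝ h x (f x) ∧ 0 < fderiv ℝ h x (f x) :=
  stmt12_general ψ hψ f hf g hrel α₁ hα₁ h0 ε C₁ hε hC Lfψ s h hLf hs hdef
end

section
/- Let a < 0, b ∈ ℝᵐ with b ≠ 0, Γ positive definite symmetric, p > 0, c < 0. Then the minimizer of ½‖u‖²_Γ + ½p·ω² over (u, ω) ∈ ℝᵐ × ℝ≥0 subject to a + bᵀΓu + p·c·ω ≥ 0 is u* = (-a/‖b‖²_Γ)·b, ω* = 0, where ‖b‖²_Γ = bᵀΓb. -/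
/-!
Since `c < 0` and `ω ≥ 0`, every feasible `(u, ω)` satisfies `-a ≤ bᵀΓu`, and `ω` only adds
`pω²/2 ≥ 0` to the cost, so it suffices that `u* = s • b`, `s = -a / bᵀΓb ≥ 0`, minimizes `uᵀΓu`
on that half-space. This is the tangent-plane inequality `uᵀΓu ≥ 2 u*ᵀΓu - u*ᵀΓu*` of the
convex form, combined with `u*ᵀΓu = s bᵀΓu ≥ s (-a) = u*ᵀΓu*`.
-/

open Matrix

namespace Matrix.PosSemidef

variable {n : Type*} [Fintype n] {Γ : Matrix n n ℝ}

lemma dotProduct_mulVec_comm (hΓ : Γ.PosSemidef) (u v : n → ℝ) :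
    u ⬝ᵥ Γ *ᵥ v = v ⬝ᵥ Γ *ᵥ u := by
  have hsymm : Γᵀ = Γ := by simpa using hΓ.isHermitian.eq
  rw [dotProduct_mulVec, ← mulVec_transpose, hsymm, dotProduct_comm]

lemma two_mul_dotProduct_mulVec_sub_le (hΓ : Γ.PosSemidef) (u v : n → ℝ) :
    2 * (v ⬝ᵥ Γ *ᵥ u) - v ⬝ᵥ Γ *ᵥ v ≤ u ⬝ᵥ Γ *ᵥ u := by
  have hdiff : 0 ≤ (u - v) ⬝ᵥ Γ *ᵥ (u - v) := hΓ.dotProduct_mulVec_nonneg (u - v)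
  rw [mulVec_sub, dotProduct_sub, sub_dotProduct, sub_dotProduct,
    hΓ.dotProduct_mulVec_comm u v] at hdiff
  linarith

lemma dotProduct_mulVec_halfSpaceProjection_le (hΓ : Γ.PosSemidef) {a : ℝ} (ha : a ≤ 0)
    {b u : n → ℝ} (hB : 0 < b ⬝ᵥ Γ *ᵥ b) (hu : -a ≤ b ⬝ᵥ Γ *ᵥ u) :
    ((-a / (b ⬝ᵥ Γ *ᵥ b)) • b) ⬝ᵥ Γ *ᵥ ((-a / (b ⬝ᵥ Γ *ᵥ b)) • b) ≤ u ⬝ᵥ Γ *ᵥ u := by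
  set B := b ⬝ᵥ Γ *ᵥ b
  set s := -a / B
  have hs : 0 ≤ s := div_nonneg (neg_nonneg.2 ha) hB.le
  have hsB : s * B = -a := div_mul_cancel₀ _ hB.ne'
  have htangent := hΓ.two_mul_dotProduct_mulVec_sub_le u (s • b)
  simp only [mulVec_smul, dotProduct_smul, smul_dotProduct, smul_eq_mul] at htangent ⊢
  nlinarith [mul_le_mul_of_nonneg_left hu hs]

end Matrix.PosSemidef

/-- Case 4 of the KKT analysis of the OD-CBF-QP: `c < 0`, the decay variable
saturates at `0` and the controller is the standard half-space projection. -/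
theorem stmt13 {m : ℕ} (a : ℝ) (ha : a < 0) (b : Fin m → ℝ) (hb : b ≠ 0)
    (Γ : Matrix (Fin m) (Fin m) ℝ) (hΓ : Γ.PosDef)
    (p c : ℝ) (hp : 0 < p) (hc : c < 0) :
    (0 ≤ a + b ⬝ᵥ Γ *ᵥ ((-a / (b ⬝ᵥ Γ *ᵥ b)) • b) + p * c * 0) ∧
      ∀ u : Fin m → ℝ, ∀ ω : ℝ, 0 ≤ ω → 0 ≤ a + b ⬝ᵥ Γ *ᵥ u + p * c * ω →
        (1 / 2) * (((-a / (b ⬝ᵥ Γ *ᵥ b)) • b) ⬝ᵥ Γ *ᵥ ((-a / (b ⬝ᵥ Γ *ᵥ b)) • b)) +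
            (1 / 2) * p * (0 : ℝ) ^ 2 ≤
          (1 / 2) * (u ⬝ᵥ Γ *ᵥ u) + (1 / 2) * p * ω ^ 2 := by
  have hB : 0 < b ⬝ᵥ Γ *ᵥ b := by simpa using hΓ.dotProduct_mulVec_pos hb
  refine ⟨?feasible, fun u ω hω hcon => ?optimal⟩
  case feasible =>
    rw [mulVec_smul, dotProduct_smul, smul_eq_mul, div_mul_cancel₀ _ hB.ne']
    simp
  case optimal =>
    have hdecay : p * c * ω ≤ 0 :=
      mul_nonpos_of_nonpos_of_nonneg (mul_nonpos_of_nonneg_of_nonpos hp.le hc.le) hω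
    have hu : -a ≤ b ⬝ᵥ Γ *ᵥ u := by linarith
    have hproj := hΓ.posSemidef.dotProduct_mulVec_halfSpaceProjection_le ha.le hB hu
    nlinarith [mul_nonneg hp.le (sq_nonneg ω)]
end

section
/- Let a < 0, b ∈ ℝᵐ, Γ positive definite symmetric, p > 0, c ≥ 0 with ‖b‖²_Γ + p·c² > 0. Then the minimizer of ½‖u‖²_Γ + ½p·ω² over (u, ω) ∈ ℝᵐ × ℝ≥0 subject to a + bᵀΓu + p·c·ω ≥ 0 is u* = (-a/(‖b‖²_Γ + p·c²))·b and ω* = -a·c/(‖b‖²_Γ + p·c²), and at this point the constraint holds with equality. -/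
open Matrix

lemma symm_dot {m : ℕ} (b u : Fin m → ℝ) (Γ : Matrix (Fin m) (Fin m) ℝ)
    (hΓ : Γ.IsHermitian) : u ⬝ᵥ Γ *ᵥ b = b ⬝ᵥ Γ *ᵥ u := by
  rw [dotProduct_mulVec, ← mulVec_transpose]
  have : Γᵀ = Γ := by
    have := hΓ; rwa [Matrix.IsHermitian, conjTranspose_eq_transpose_of_trivial] at this
  rw [this, dotProduct_comm]

lemma cs_dot {m : ℕ} (b u : Fin m → ℝ) (Γ : Matrix (Fin m) (Fin m) ℝ)
    (hΓ : Γ.PosDef) :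
    (b ⬝ᵥ Γ *ᵥ u) ^ 2 ≤ (b ⬝ᵥ Γ *ᵥ b) * (u ⬝ᵥ Γ *ᵥ u) := by
  by_cases hb : b = 0
  · simp [hb]
  set B := b ⬝ᵥ Γ *ᵥ b with hB
  set U := u ⬝ᵥ Γ *ᵥ u with hU
  set s := b ⬝ᵥ Γ *ᵥ u with hs
  have hBpos : 0 < B := hΓ.re_dotProduct_pos hb
  have hsym : u ⬝ᵥ Γ *ᵥ b = s := symm_dot b u Γ hΓ.1
  have h0 : 0 ≤ (B • u - s • b) ⬝ᵥ Γ *ᵥ (B • u - s • b) :=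
    hΓ.posSemidef.re_dotProduct_nonneg _
  have hexp : (B • u - s • b) ⬝ᵥ Γ *ᵥ (B • u - s • b)
      = B ^ 2 * U - 2 * B * s ^ 2 + s ^ 2 * B := by
    simp [mulVec_add, mulVec_smul, sub_eq_add_neg, dotProduct_add, add_dotProduct,
      smul_dotProduct, dotProduct_smul, mulVec_neg, dotProduct_neg, neg_dotProduct,
      hsym, ← hB, ← hU, ← hs]
    ring
  rw [hexp] at h0
  nlinarith [hBpos]

/-- Case 2 of the KKT analysis of the OD-CBF-QP: active constraint, inactive bound. -/
theorem stmt14 {m : ℕ} (a : ℝ) (ha : a < 0) (b : Fin m → ℝ)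
    (Γ : Matrix (Fin m) (Fin m) ℝ) (hΓ : Γ.PosDef)
    (p c : ℝ) (hp : 0 < p) (hc : 0 ≤ c)
    (hden : 0 < b ⬝ᵥ Γ *ᵥ b + p * c ^ 2) :
    (0 ≤ -a * c / (b ⬝ᵥ Γ *ᵥ b + p * c ^ 2) ∧
      a + b ⬝ᵥ Γ *ᵥ ((-a / (b ⬝ᵥ Γ *ᵥ b + p * c ^ 2)) • b) +
        p * c * (-a * c / (b ⬝ᵥ Γ *ᵥ b + p * c ^ 2)) = 0) ∧
      ∀ u : Fin m → ℝ, ∀ ω : ℝ, 0 ≤ ω → 0 ≤ a + b ⬝ᵥ Γ *ᵥ u + p * c * ω →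
        (1 / 2) * (((-a / (b ⬝ᵥ Γ *ᵥ b + p * c ^ 2)) • b) ⬝ᵥ
              Γ *ᵥ ((-a / (b ⬝ᵥ Γ *ᵥ b + p * c ^ 2)) • b)) +
            (1 / 2) * p * (-a * c / (b ⬝ᵥ Γ *ᵥ b + p * c ^ 2)) ^ 2 ≤
          (1 / 2) * (u ⬝ᵥ Γ *ᵥ u) + (1 / 2) * p * ω ^ 2 := by
  set B := b ⬝ᵥ Γ *ᵥ b with hB
  set D := B + p * c ^ 2 with hD
  have hBnn : 0 ≤ B := hΓ.posSemidef.re_dotProduct_nonneg b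
  have hsmul : ∀ t : ℝ, b ⬝ᵥ Γ *ᵥ (t • b) = t * B := by
    intro t; rw [mulVec_smul, dotProduct_smul, smul_eq_mul, hB]
  have hsmul2 : ∀ t : ℝ, (t • b) ⬝ᵥ Γ *ᵥ (t • b) = t ^ 2 * B := by
    intro t; rw [mulVec_smul, dotProduct_smul, smul_dotProduct, smul_eq_mul,
      smul_eq_mul, hB]; ring
  refine ⟨⟨div_nonneg (mul_nonneg (by linarith) hc) hden.le, ?_⟩, ?_⟩
  · rw [hsmul]
    field_simp
    ring
  · intro u ω hω hcon
    rw [hsmul2]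
    set U := u ⬝ᵥ Γ *ᵥ u with hU
    set s := b ⬝ᵥ Γ *ᵥ u with hs
    have hcs : s ^ 2 ≤ B * U := cs_dot b u Γ hΓ
    have hUnn : 0 ≤ U := hΓ.posSemidef.re_dotProduct_nonneg u
    have hDne : B + p * c ^ 2 ≠ 0 := by rw [← hD]; exact hden.ne'
    -- Cauchy–Schwarz on the combined space
    have key2 : 2 * c * ω * s ≤ B * ω ^ 2 + c ^ 2 * U := by
      rcases eq_or_lt_of_le hBnn with h | h
      · have hs0 : s = 0 := by nlinarith
        rw [hs0]
        nlinarith [mul_nonneg (sq_nonneg c) hUnn, mul_nonneg hBnn (sq_nonneg ω)]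
      · nlinarith [sq_nonneg (B * ω - c * s),
          mul_nonneg (sq_nonneg c) (sub_nonneg.mpr hcs)]
    have key : (s + p * c * ω) ^ 2 ≤ D * (U + p * ω ^ 2) := by
      rw [hD]
      nlinarith [mul_le_mul_of_nonneg_left key2 hp.le, hcs]
    have hfeas : -a ≤ s + p * c * ω := by linarith
    have hsq : a ^ 2 ≤ D * (U + p * ω ^ 2) := by
      have h1 : (-a) ^ 2 ≤ (s + p * c * ω) ^ 2 := by
        apply sq_le_sq' <;> nlinarith
      nlinarith
    have h2 : a ^ 2 / (2 * D) ≤ (1 / 2) * U + (1 / 2) * p * ω ^ 2 := by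
      rw [div_le_iff₀ (by positivity)]
      nlinarith [hsq]
    calc (1 / 2) * ((-a / D) ^ 2 * B) + (1 / 2) * p * (-a * c / D) ^ 2
        = a ^ 2 / (2 * D) := by rw [hD]; field_simp
      _ ≤ (1 / 2) * U + (1 / 2) * p * ω ^ 2 := h2
end
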